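/- arXiv:2001.03570 — 3 statements merged into one kernel-verified Lean document; each statement's English description precedes it below -/
import Mathlib

section
/- For Hermitian n×n matrices A and B, the decreasingly sorted eigenvalue vector of A+B is majorized by the sum of the decreasingly sorted eigenvalue vectors of A and of B, i.e. λ(A+B) ≺ λ(A)+λ(B). -/
/-!
Take an orthonormal eigenbasis `w` of `A + B` ordered by decreasing eigenvalue. Then
`λᵢ(A + B) = re ⟪wᵢ, A wᵢ⟫ + re ⟪wᵢ, B wᵢ⟫`, so it suffices that the diagonal of a Hermitian
operator `T` in any orthonormal basis is majorized by its sorted eigenvalues (Schur). Expanding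
in an eigenbasis `u`, `re ⟪wᵢ, T wᵢ⟫ = ∑ⱼ λⱼ ‖⟪uⱼ, wᵢ⟫‖²`, and the matrix `‖⟪uⱼ, wᵢ⟫‖²` is
doubly stochastic by Parseval. Hence the sum of the first `m` diagonal entries is `∑ⱼ λⱼ cⱼ` with
weights `0 ≤ cⱼ ≤ 1` of total `m`, which is at most the sum of the `m` largest `λⱼ`. The totals
agree because both are the trace.
-/

/-- Partial sum of the first `m` entries of a vector in `ℝ^n`. -/
def pSum {n : ℕ} (x : Fin n → ℝ) (m : ℕ) : ℝ :=
  ∑ i : Fin n, if (i : ℕ) < m then x i else 0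

/-- Majorization for (decreasingly sorted) vectors. -/
def Maj {n : ℕ} (x y : Fin n → ℝ) : Prop :=
  (∀ m : ℕ, pSum x m ≤ pSum y m) ∧ (∑ i, x i) = (∑ i, y i)

/-- `μ` is the decreasingly sorted eigenvalue vector of a Hermitian matrix. -/
def IsSortedEig {n : ℕ} {A : Matrix (Fin n) (Fin n) ℂ} (hA : A.IsHermitian)
    (μ : Fin n → ℝ) : Prop :=
  Antitone μ ∧ ∃ σ : Equiv.Perm (Fin n), ∀ i, μ i = hA.eigenvalues (σ i)

open Finset RCLike
open scoped InnerProductSpace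

lemma pSum_eq_sum_filter {n : ℕ} (x : Fin n → ℝ) (m : ℕ) :
    pSum x m = ∑ i : Fin n with i.val < m, x i :=
  (sum_filter _ _).symm

lemma pSum_le_sum {n : ℕ} {x : Fin n → ℝ} (hx : ∀ i, 0 ≤ x i) (m : ℕ) :
    pSum x m ≤ ∑ i, x i :=
  sum_le_sum fun i _ => by split_ifs <;> simp [hx i]

lemma pSum_add {n : ℕ} (x y : Fin n → ℝ) (m : ℕ) :
    pSum (fun i => x i + y i) m = pSum x m + pSum y m := by
  simp only [pSum_eq_sum_filter, sum_add_distrib]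

lemma Maj.add {n : ℕ} {x y x' y' : Fin n → ℝ} (h : Maj x y) (h' : Maj x' y') :
    Maj (fun i => x i + x' i) (fun i => y i + y' i) :=
  ⟨fun m => by simpa only [pSum_add] using add_le_add (h.1 m) (h'.1 m),
    by simp only [sum_add_distrib, h.2, h'.2]⟩

lemma Antitone.exists_threshold {n : ℕ} {μ : Fin n → ℝ} (hμ : Antitone μ) (m : ℕ) :
    ∃ t, (∀ j : Fin n, (j : ℕ) < m → t ≤ μ j) ∧ (∀ j : Fin n, m ≤ (j : ℕ) → μ j ≤ t) := by
  cases n with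
  | zero => exact ⟨0, fun j => j.elim0, fun j => j.elim0⟩
  | succ k =>
    refine ⟨μ ⟨min m k, by omega⟩, fun j hj => hμ ?_, fun j hj => hμ ?_⟩ <;>
      simp only [Fin.le_def] <;> omega

lemma sum_mul_le_pSum_of_threshold {n m : ℕ} {μ c : Fin n → ℝ} {t : ℝ}
    (h_above : ∀ j : Fin n, (j : ℕ) < m → t ≤ μ j) (h_below : ∀ j : Fin n, m ≤ (j : ℕ) → μ j ≤ t)
    (hc0 : ∀ j, 0 ≤ c j) (hc1 : ∀ j, c j ≤ 1) (hc : ∑ j, c j = pSum (fun _ : Fin n => 1) m) :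
    ∑ j, μ j * c j ≤ pSum μ m := by
  have hterm : ∀ j : Fin n, 0 ≤ (μ j - t) * ((if (j : ℕ) < m then 1 else 0) - c j) := by
    intro j
    by_cases hj : (j : ℕ) < m
    · simp only [hj, if_true]
      exact mul_nonneg (by linarith [h_above j hj]) (by linarith [hc1 j])
    · simp only [hj, if_false, zero_sub]
      exact mul_nonneg_of_nonpos_of_nonpos (by linarith [h_below j (not_lt.mp hj)])
        (by linarith [hc0 j])
  have hsplit : pSum μ m - ∑ j, μ j * c j
      = ∑ j, (μ j - t) * ((if (j : ℕ) < m then 1 else 0) - c j)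
        + t * (pSum (fun _ : Fin n => 1) m - ∑ j, c j) := by
    simp only [pSum, mul_sub, mul_sum, ← sum_sub_distrib, ← sum_add_distrib]
    refine sum_congr rfl fun j _ => ?_
    split_ifs <;> ring
  rw [hc, sub_self, mul_zero, add_zero] at hsplit
  linarith [sum_nonneg fun j (_ : j ∈ univ) => hterm j]

lemma Antitone.sum_mul_le_pSum {n m : ℕ} {μ c : Fin n → ℝ} (hμ : Antitone μ)
    (hc0 : ∀ j, 0 ≤ c j) (hc1 : ∀ j, c j ≤ 1) (hc : ∑ j, c j = pSum (fun _ : Fin n => 1) m) :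
    ∑ j, μ j * c j ≤ pSum μ m :=
  let ⟨_, h_above, h_below⟩ := hμ.exists_threshold m
  sum_mul_le_pSum_of_threshold h_above h_below hc0 hc1 hc

section Schur

variable {𝕜 E : Type*} [RCLike 𝕜] [NormedAddCommGroup E] [InnerProductSpace 𝕜 E]

lemma re_inner_apply_self_eq_sum {ι : Type*} [Fintype ι] {T : E →ₗ[𝕜] E}
    {u : OrthonormalBasis ι 𝕜 E} {μ : ι → ℝ} (hu : ∀ j, T (u j) = (μ j : 𝕜) • u j) (v : E) :
    re ⟪v, T v⟫_𝕜 = ∑ j, μ j * ‖⟪u j, v⟫_𝕜‖ ^ 2 := by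
  have hTv : T v = ∑ j, ⟪u j, v⟫_𝕜 • (μ j : 𝕜) • u j := by
    conv_lhs => rw [← u.sum_repr' v]
    simp only [map_sum, map_smul, hu]
  simp only [hTv, inner_sum, inner_smul_right, map_sum]
  refine sum_congr rfl fun j _ => ?_
  rw [mul_left_comm, re_ofReal_mul, inner_mul_symm_re_eq_norm, norm_mul, norm_inner_symm, sq]

lemma re_inner_apply_self_of_apply_eq_smul {T : E →ₗ[𝕜] E} {v : E} {c : ℝ} (hv : ‖v‖ = 1)
    (h : T v = (c : 𝕜) • v) : re ⟪v, T v⟫_𝕜 = c := by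
  rw [h, inner_smul_right, inner_self_eq_norm_sq_to_K, hv]
  simp

variable {n : ℕ} {T : E →ₗ[𝕜] E} {u : OrthonormalBasis (Fin n) 𝕜 E} {μ : Fin n → ℝ}

lemma pSum_re_inner_apply_self_le (hμ : Antitone μ) (hu : ∀ j, T (u j) = (μ j : 𝕜) • u j)
    (w : OrthonormalBasis (Fin n) 𝕜 E) (m : ℕ) :
    pSum (fun i => re ⟪w i, T (w i)⟫_𝕜) m ≤ pSum μ m := by
  set c : Fin n → ℝ := fun j => pSum (fun i => ‖⟪u j, w i⟫_𝕜‖ ^ 2) m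
  have hexp : pSum (fun i => re ⟪w i, T (w i)⟫_𝕜) m = ∑ j, μ j * c j := by
    simp only [c, pSum_eq_sum_filter, re_inner_apply_self_eq_sum hu, mul_sum]
    exact sum_comm
  rw [hexp]
  refine hμ.sum_mul_le_pSum (fun j => ?_) (fun j => ?_) ?_
  · exact sum_nonneg fun _ _ => by positivity
  · calc c j ≤ ∑ i, ‖⟪u j, w i⟫_𝕜‖ ^ 2 := pSum_le_sum (fun _ => sq_nonneg _) m
      _ = 1 := by rw [w.sum_sq_norm_inner_left, u.orthonormal.1 j, one_pow]
  · simp only [c, pSum_eq_sum_filter]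
    rw [sum_comm]
    refine sum_congr rfl fun i _ => ?_
    rw [u.sum_sq_norm_inner_right, w.orthonormal.1 i, one_pow]

lemma sum_re_inner_apply_self (hu : ∀ j, T (u j) = (μ j : 𝕜) • u j)
    (w : OrthonormalBasis (Fin n) 𝕜 E) :
    ∑ i, re ⟪w i, T (w i)⟫_𝕜 = ∑ j, μ j :=
  calc ∑ i, re ⟪w i, T (w i)⟫_𝕜 = re (T.trace 𝕜 E) := by rw [T.trace_eq_sum_inner w, map_sum]
    _ = ∑ j, re ⟪u j, T (u j)⟫_𝕜 := by rw [T.trace_eq_sum_inner u, map_sum]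
    _ = ∑ j, μ j := sum_congr rfl fun j _ =>
      re_inner_apply_self_of_apply_eq_smul (u.orthonormal.1 j) (hu j)

theorem maj_re_inner_apply_self (hμ : Antitone μ) (hu : ∀ j, T (u j) = (μ j : 𝕜) • u j)
    (w : OrthonormalBasis (Fin n) 𝕜 E) : Maj (fun i => re ⟪w i, T (w i)⟫_𝕜) μ :=
  ⟨pSum_re_inner_apply_self_le hμ hu w, sum_re_inner_apply_self hu w⟩

end Schur

open Matrix in
lemma IsSortedEig.exists_orthonormalBasis {n : ℕ} {M : Matrix (Fin n) (Fin n) ℂ}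
    {hM : M.IsHermitian} {μ : Fin n → ℝ} (hμ : IsSortedEig hM μ) :
    ∃ u : OrthonormalBasis (Fin n) ℂ (EuclideanSpace ℂ (Fin n)),
      ∀ i, toEuclideanLin M (u i) = (μ i : ℂ) • u i := by
  obtain ⟨-, σ, hσ⟩ := hμ
  refine ⟨hM.eigenvectorBasis.reindex σ.symm, fun i => ?_⟩
  rw [OrthonormalBasis.reindex_apply, Equiv.symm_symm, hσ]
  ext k
  simp [toLpLin_apply, hM.mulVec_eigenvectorBasis]

open Matrix in
/-- For Hermitian matrices A, B: λ(A+B) ≺ λ(A) + λ(B) (decreasingly sorted). -/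
theorem eigenvalues_add_majorization {n : ℕ} (A B : Matrix (Fin n) (Fin n) ℂ)
    (hA : A.IsHermitian) (hB : B.IsHermitian) (hAB : (A + B).IsHermitian)
    (μAB μA μB : Fin n → ℝ)
    (hμAB : IsSortedEig hAB μAB) (hμA : IsSortedEig hA μA) (hμB : IsSortedEig hB μB) :
    Maj μAB (fun i => μA i + μB i) := by
  obtain ⟨w, hw⟩ := hμAB.exists_orthonormalBasis
  obtain ⟨uA, huA⟩ := hμA.exists_orthonormalBasis
  obtain ⟨uB, huB⟩ := hμB.exists_orthonormalBasis
  have hdiag : μAB = fun i => re ⟪w i, toEuclideanLin A (w i)⟫_ℂ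
      + re ⟪w i, toEuclideanLin B (w i)⟫_ℂ := funext fun i => by
    rw [← map_add, ← inner_add_right, ← LinearMap.add_apply, ← map_add,
      re_inner_apply_self_of_apply_eq_smul (w.orthonormal.1 i) (hw i)]
  rw [hdiag]
  exact (maj_re_inner_apply_self hμA.1 huA w).add (maj_re_inner_apply_self hμB.1 huB w)
end

section
/- Let ρ be a 2×2 Hermitian positive semidefinite matrix with diagonal entries p_k = p_{kk'} + p_{k\bar{k}'} and p_{k'} = p_{kk'} + p_{\bar{k}k'}, where p_{kk'}, p_{k\bar{k}'}, p_{\bar{k}k'} ≥ 0, and off-diagonal entry z with |z|² ≤ p_{\bar{k}k'}·p_{k\bar{k}'}. Then the smallest eigenvalue of ρ satisfies λ_- ≥ p_{kk'}. -/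
/-- Since `((a + b) / 2) ^ 2 - ((a - b) / 2) ^ 2 = a * b`, the radicand is at most
`((a + b) / 2) ^ 2`. -/
theorem Real.sqrt_sub_sq_div_four_add_le_of_le_mul {a b w : ℝ} (ha : 0 ≤ a) (hb : 0 ≤ b)
    (hw : w ≤ a * b) : √((a - b) ^ 2 / 4 + w) ≤ (a + b) / 2 := by
  rw [Real.sqrt_le_iff]
  constructor
  · positivity
  · nlinarith

theorem smallest_eigenvalue_ge_general (c a b : ℝ) (z : ℂ)
    (ha : 0 ≤ a) (hb : 0 ≤ b)
    (hz : ‖z‖ ^ 2 ≤ b * a) :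
    c ≤ ((c + a) + (c + b)) / 2 -
        Real.sqrt (((c + a) - (c + b)) ^ 2 / 4 + ‖z‖ ^ 2) := by
  have hsqrt := Real.sqrt_sub_sq_div_four_add_le_of_le_mul ha hb (hz.trans_eq (mul_comm b a))
  rw [add_sub_add_left_eq_sub]
  linarith

/-- The smallest eigenvalue λ₋ = (p_k+p_{k'})/2 − sqrt((p_k−p_{k'})²/4+|z|²) of the
2×2 Hermitian PSD matrix [[p_k, z̄],[z, p_{k'}]] with p_k = p_{kk'} + p_{k k̄'},
p_{k'} = p_{kk'} + p_{k̄ k'} and |z|² ≤ p_{k̄k'}·p_{kk̄'} satisfies λ₋ ≥ p_{kk'}. -/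
theorem smallest_eigenvalue_ge (c a b : ℝ) (z : ℂ)
    (hc : 0 ≤ c) (ha : 0 ≤ a) (hb : 0 ≤ b)
    (hz : ‖z‖ ^ 2 ≤ b * a) :
    c ≤ ((c + a) + (c + b)) / 2 -
        Real.sqrt (((c + a) - (c + b)) ^ 2 / 4 + ‖z‖ ^ 2) :=
  smallest_eigenvalue_ge_general c a b z ha hb hz
end

section
/- Let ρ be a 2×2 Hermitian matrix with diagonal entries p_k = p_{kk'} + p_{k\bar{k}'}, p_{k'} = p_{kk'} + p_{\bar{k}k'} (all summands nonnegative) and off-diagonal entry z with |z|² ≤ p_{\bar{k}k'}·p_{k\bar{k}'}. Then the largest eigenvalue satisfies λ_+ ≤ p_k + p_{\bar{k}k'}. -/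
/-- The largest eigenvalue λ₊ = (p_k+p_{k'})/2 + sqrt((p_k−p_{k'})²/4+|z|²) of the
2×2 Hermitian matrix [[p_k, z̄],[z, p_{k'}]] with p_k = p_{kk'} + p_{kk̄'},
p_{k'} = p_{kk'} + p_{k̄k'} and |z|² ≤ p_{k̄k'}·p_{kk̄'} satisfies
λ₊ ≤ p_k + p_{k̄k'}. -/
theorem largest_eigenvalue_le (c a b : ℝ) (z : ℂ)
    (hc : 0 ≤ c) (ha : 0 ≤ a) (hb : 0 ≤ b)
    (hz : ‖z‖ ^ 2 ≤ b * a) :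
    ((c + a) + (c + b)) / 2 +
        Real.sqrt (((c + a) - (c + b)) ^ 2 / 4 + ‖z‖ ^ 2)
      ≤ (c + a) + b := by
  have h1 : ((c + a) - (c + b)) ^ 2 / 4 + ‖z‖ ^ 2 ≤ ((a + b) / 2) ^ 2 := by
    nlinarith
  have h2 : Real.sqrt (((c + a) - (c + b)) ^ 2 / 4 + ‖z‖ ^ 2) ≤ (a + b) / 2 := by
    calc _ ≤ Real.sqrt (((a + b) / 2) ^ 2) := Real.sqrt_le_sqrt h1
    _ = (a + b) / 2 := Real.sqrt_sq (by positivity)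
  linarith
end
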